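/- Define the 2×2 unitaries U_k = [[cos α_k, e^{iγ_k} sin α_k], [e^{iβ_k} sin α_k, −e^{i(β_k+γ_k)} cos α_k]] for k = 1, 2, 3 with parameters α₁ = α₂ = π/3, α₃ = 0, β₁ = γ₁ = 0, β₂ = −γ₂ = −arccos(−1/3), β₃ arbitrary with γ₃ = −β₃ − π (all mod 2π). Then tr(U_j† U_k) = 0 for all j ≠ k. -/
import Mathlib


open Matrix Complex Real

noncomputable def paramU (α β γ : ℝ) : Matrix (Fin 2) (Fin 2) ℂ :=
  !![Real.cos α, Complex.exp (γ * Complex.I) * Real.sin α;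
     Complex.exp (β * Complex.I) * Real.sin α,
       -Complex.exp ((β + γ) * Complex.I) * Real.cos α]

lemma trace_paramU (α β γ α' β' γ' : ℝ) :
    ((paramU α β γ)ᴴ * paramU α' β' γ').trace =
      (Real.cos α * Real.cos α') * (1 + Complex.exp ((↑β' + ↑γ' - ↑β - ↑γ) * Complex.I))
      + (Real.sin α * Real.sin α') *
        (Complex.exp ((↑β' - ↑β) * Complex.I) + Complex.exp ((↑γ' - ↑γ) * Complex.I)) := by
  simp [paramU, Matrix.trace, Matrix.mul_apply, Fin.sum_univ_succ, conjTranspose_apply,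
    ← Complex.exp_conj, _root_.map_mul, Complex.conj_ofReal, Complex.conj_I,
    ← Complex.ofReal_cos, ← Complex.ofReal_sin]
  simp only [sub_eq_add_neg, add_mul, neg_mul, Complex.exp_add, Complex.exp_sub, Complex.exp_neg]
  ring_nf

lemma h2 : Complex.exp ((Real.arccos (-(1/3)) : ℝ) * Complex.I)
    + Complex.exp (-((Real.arccos (-(1/3)) : ℝ) : ℂ) * Complex.I) = -(2/3) := by
  rw [← Complex.two_cos, ← Complex.ofReal_cos, Real.cos_arccos (by norm_num) (by norm_num)]
  norm_num

lemma h3 : ((Real.sqrt 3 : ℝ) : ℂ) * ((Real.sqrt 3 : ℝ) : ℂ) = 3 := by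
  norm_cast
  exact Real.mul_self_sqrt (by norm_num)

lemma case01 : ((paramU (π/3) 0 0)ᴴ *
    paramU (π/3) (-(Real.arccos (-(1/3)))) (Real.arccos (-(1/3)))).trace = 0 := by
  rw [trace_paramU, Real.cos_pi_div_three, Real.sin_pi_div_three]
  push_cast
  rw [show (-((Real.arccos (-(1/3)) : ℝ) : ℂ) + ((Real.arccos (-(1/3)) : ℝ) : ℂ) - 0 - 0) = 0 by ring,
    show ((0:ℂ) * Complex.I) = 0 by ring, Complex.exp_zero,
    show ((-((Real.arccos (-(1/3)) : ℝ) : ℂ) - 0) * Complex.I) = -((Real.arccos (-(1/3)) : ℝ) : ℂ) * Complex.I by ring,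
    show ((((Real.arccos (-(1/3)) : ℝ) : ℂ) - 0) * Complex.I) = ((Real.arccos (-(1/3)) : ℝ) : ℂ) * Complex.I by ring]
  linear_combination ((Complex.exp ((Real.arccos (-(1/3)) : ℝ) * Complex.I)
    + Complex.exp (-((Real.arccos (-(1/3)) : ℝ) : ℂ) * Complex.I))/4) * h3 + (3/4 : ℂ) * h2

lemma case10 : ((paramU (π/3) (-(Real.arccos (-(1/3)))) (Real.arccos (-(1/3))))ᴴ *
    paramU (π/3) 0 0).trace = 0 := by
  rw [trace_paramU, Real.cos_pi_div_three, Real.sin_pi_div_three]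
  push_cast
  rw [show ((0:ℂ) + 0 - -((Real.arccos (-(1/3)) : ℝ) : ℂ) - ((Real.arccos (-(1/3)) : ℝ) : ℂ)) = 0 by ring,
    show ((0:ℂ) * Complex.I) = 0 by ring, Complex.exp_zero,
    show (((0:ℂ) - -((Real.arccos (-(1/3)) : ℝ) : ℂ)) * Complex.I) = ((Real.arccos (-(1/3)) : ℝ) : ℂ) * Complex.I by ring,
    show (((0:ℂ) - ((Real.arccos (-(1/3)) : ℝ) : ℂ)) * Complex.I) = -((Real.arccos (-(1/3)) : ℝ) : ℂ) * Complex.I by ring]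
  linear_combination ((Complex.exp ((Real.arccos (-(1/3)) : ℝ) * Complex.I)
    + Complex.exp (-((Real.arccos (-(1/3)) : ℝ) : ℂ) * Complex.I))/4) * h3 + (3/4 : ℂ) * h2

lemma expNegPi : Complex.exp (-(↑π : ℂ) * Complex.I) = -1 := by
  rw [show (-(↑π:ℂ) * Complex.I) = -((↑π:ℂ)*Complex.I) by ring, Complex.exp_neg,
    Complex.exp_pi_mul_I]
  norm_num

lemma case02 (β₃ : ℝ) : ((paramU (π/3) 0 0)ᴴ * paramU 0 β₃ (-β₃ - π)).trace = 0 := by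
  rw [trace_paramU, Real.cos_pi_div_three, Real.cos_zero, Real.sin_zero]
  push_cast
  rw [show ((β₃:ℂ) + (-↑β₃ - ↑π) - 0 - 0) = -(↑π:ℂ) by ring, expNegPi]
  ring

lemma case20 (β₃ : ℝ) : ((paramU 0 β₃ (-β₃ - π))ᴴ * paramU (π/3) 0 0).trace = 0 := by
  rw [trace_paramU, Real.cos_pi_div_three, Real.cos_zero, Real.sin_zero]
  push_cast
  rw [show ((0:ℂ) + 0 - ↑β₃ - (-↑β₃ - ↑π)) = (↑π:ℂ) by ring, Complex.exp_pi_mul_I]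
  ring

lemma case12 (β₃ : ℝ) : ((paramU (π/3) (-(Real.arccos (-(1/3)))) (Real.arccos (-(1/3))))ᴴ *
    paramU 0 β₃ (-β₃ - π)).trace = 0 := by
  rw [trace_paramU, Real.cos_pi_div_three, Real.cos_zero, Real.sin_zero]
  push_cast
  rw [show ((β₃:ℂ) + (-↑β₃ - ↑π) - -((Real.arccos (-(1/3)) : ℝ) : ℂ) - ((Real.arccos (-(1/3)) : ℝ) : ℂ)) = -(↑π:ℂ) by ring, expNegPi]
  ring

lemma case21 (β₃ : ℝ) : ((paramU 0 β₃ (-β₃ - π))ᴴ *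
    paramU (π/3) (-(Real.arccos (-(1/3)))) (Real.arccos (-(1/3)))).trace = 0 := by
  rw [trace_paramU, Real.cos_pi_div_three, Real.cos_zero, Real.sin_zero]
  push_cast
  rw [show (-((Real.arccos (-(1/3)) : ℝ) : ℂ) + ((Real.arccos (-(1/3)) : ℝ) : ℂ) - ↑β₃ - (-↑β₃ - ↑π)) = (↑π:ℂ) by ring, Complex.exp_pi_mul_I]
  ring

theorem stmt_15 (β₃ : ℝ) (U : Fin 3 → Matrix (Fin 2) (Fin 2) ℂ)
    (hU1 : U 0 = paramU (π / 3) 0 0)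
    (hU2 : U 1 = paramU (π / 3) (-(Real.arccos (-(1 / 3)))) (Real.arccos (-(1 / 3))))
    (hU3 : U 2 = paramU 0 β₃ (-β₃ - π)) :
    ∀ j k : Fin 3, j ≠ k → ((U j)ᴴ * U k).trace = 0 := by
  intro j k hjk
  fin_cases j <;> fin_cases k <;>
    first
    | exact absurd rfl hjk
    | (show ((U 0)ᴴ * U 1).trace = 0; rw [hU1, hU2]; exact case01)
    | (show ((U 1)ᴴ * U 0).trace = 0; rw [hU2, hU1]; exact case10)
    | (show ((U 0)ᴴ * U 2).trace = 0; rw [hU1, hU3]; exact case02 β₃)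
    | (show ((U 2)ᴴ * U 0).trace = 0; rw [hU3, hU1]; exact case20 β₃)
    | (show ((U 1)ᴴ * U 2).trace = 0; rw [hU2, hU3]; exact case12 β₃)
    | (show ((U 2)ᴴ * U 1).trace = 0; rw [hU3, hU2]; exact case21 β₃)
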